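/- Let B be the backward shift on ℓ^p(ℕ, ω) with sup_n ω_n/ω_{n+1} < ∞. Suppose there exist a strictly increasing sequence (n_k) of integers, a convergent sequence (x_k) in ℓ^p(ℕ, ω), a vector y, and δ > 0 such that the closed ball of center y and radius δ does not contain 0 and ‖B^{n_k} x_k − y‖ < δ for all k. Then liminf_{n→∞} ω_n = 0. -/

import Mathlib

/-!
Put `v_k = B^{n_k} x_k`. Since `‖y‖ > δ`, some initial segment `[0, M)` already carries more
than `δ` of the norm of `y`, so the restrictions of the `v_k` to `[0, M)` have norm at least some
`c > 0`; by the triangle inequality over the coordinates `j < M`, some `j_k < M` satisfies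
`c ≤ (∑_{i<M} ω_i) |x_k(j_k + n_k)|`. On the other hand `x_k → z` makes the tails of `x_k`
beyond `n_k` tend to `0`, so `ω_{j_k + n_k} |x_k(j_k + n_k)| → 0`. Dividing,
`ω_{j_k + n_k} → 0` along indices tending to infinity.
-/

open MeasureTheory Filter Topology
open scoped ENNReal

noncomputable section

/-- The weighted measure on the index set `I` giving the point `k` mass `(ω k) ^ p`,
so that `Lp ℂ p (wMeasure p ω)` is the weighted sequence space `ℓ^p(I, ω)`. -/
def wMeasure {I : Type*} [MeasurableSpace I] (p : ENNReal) (ω : I → ℝ) : Measure I :=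
  Measure.sum (fun k => ENNReal.ofReal ((ω k) ^ p.toReal) • Measure.dirac k)

section Tails

variable {α E : Type*} [MeasurableSpace α] [NormedAddCommGroup E] {p : ℝ≥0∞} {μ : Measure α}

theorem eLpNorm_indicator_le_eLpNorm_sub_add {f g : α → E} (hf : AEStronglyMeasurable f μ)
    (hg : AEStronglyMeasurable g μ) (hp : 1 ≤ p) {s : Set α} (hs : MeasurableSet s) :
    eLpNorm (s.indicator f) p μ ≤ eLpNorm (f - g) p μ + eLpNorm (s.indicator g) p μ :=
  calc eLpNorm (s.indicator f) p μ = eLpNorm (s.indicator (f - g) + s.indicator g) p μ := by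
        rw [← Set.indicator_add', sub_add_cancel]
    _ ≤ eLpNorm (s.indicator (f - g)) p μ + eLpNorm (s.indicator g) p μ :=
        eLpNorm_add_le ((hf.sub hg).indicator hs) (hg.indicator hs) hp
    _ ≤ eLpNorm (f - g) p μ + eLpNorm (s.indicator g) p μ := by
        gcongr; exact eLpNorm_indicator_le _

theorem tendsto_eLpNorm_indicator_of_antitone (hp : p ≠ ∞) {f : α → E} (hf : MemLp f p μ)
    {s : ℕ → Set α} (hs : ∀ n, MeasurableSet (s n)) (hanti : Antitone s)
    (hempty : ⋂ n, s n = ∅) :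
    Tendsto (fun n => eLpNorm ((s n).indicator f) p μ) atTop (𝓝 0) := by
  rcases eq_or_ne p 0 with rfl | hp0
  · simp
  have hq : 0 < p.toReal := ENNReal.toReal_pos hp0 hp
  set g : α → ℝ≥0∞ := fun x => ‖f x‖ₑ ^ p.toReal
  have hint : Tendsto (fun n => ∫⁻ x, (s n).indicator g x ∂μ) atTop (𝓝 0) := by
    have hmeas : ∀ n, AEMeasurable ((s n).indicator g) μ := fun n =>
      (hf.1.enorm.pow_const _).indicator (hs n)
    have hmono : ∀ x, Antitone fun n => (s n).indicator g x := fun x m n hmn =>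
      Set.indicator_le_indicator_of_subset (hanti hmn) (fun _ => zero_le) x
    have hfin : ∫⁻ x, (s 0).indicator g x ∂μ ≠ ∞ :=
      ((lintegral_mono (Set.indicator_le_self _ g)).trans_lt
        (lintegral_rpow_enorm_lt_top_of_eLpNorm_lt_top hp0 hp hf.2)).ne
    have hpt : ∀ x, Tendsto (fun n => (s n).indicator g x) atTop (𝓝 0) := by
      intro x
      obtain ⟨N, hN⟩ : ∃ N, x ∉ s N := by simpa using Set.eq_empty_iff_forall_notMem.1 hempty x
      exact tendsto_const_nhds.congr' (eventually_atTop.2 ⟨N, fun n hn =>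
        (Set.indicator_of_notMem (fun h => hN (hanti hn h)) _).symm⟩)
    simpa using lintegral_tendsto_of_tendsto_of_antitone (F := 0) hmeas (.of_forall hmono) hfin
      (.of_forall hpt)
  have hroot := ((ENNReal.continuous_rpow_const (y := 1 / p.toReal)).tendsto 0).comp hint
  rw [ENNReal.zero_rpow_of_pos (by positivity)] at hroot
  refine hroot.congr fun n => ?_
  simp only [Function.comp_apply, eLpNorm_eq_lintegral_rpow_enorm_toReal hp0 hp,
    enorm_indicator_eq_indicator_enorm]
  congr 2
  ext x
  by_cases hx : x ∈ s n <;> simp [g, hx, hq]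

end Tails

section NatIndexed

variable {E : Type*} [NormedAddCommGroup E] {p : ℝ≥0∞} {μ : Measure ℕ}

theorem tendsto_eLpNorm_indicator_Ici (hp : p ≠ ∞) {f : ℕ → E} (hf : MemLp f p μ) :
    Tendsto (fun N => eLpNorm ((Set.Ici N).indicator f) p μ) atTop (𝓝 0) :=
  tendsto_eLpNorm_indicator_of_antitone hp hf (fun _ => measurableSet_Ici)
    (fun _ _ h => Set.Ici_subset_Ici.2 h) (Set.iInter_eq_empty_iff.2 fun m => ⟨m + 1, by simp⟩)

theorem tendsto_eLpNorm_indicator_Ici_of_tendsto [Fact (1 ≤ p)] (hp : p ≠ ∞) {ι : Type*}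
    {l : Filter ι} {x : ι → Lp E p μ} {z : Lp E p μ} (hx : Tendsto x l (𝓝 z)) {N : ι → ℕ}
    (hN : Tendsto N l atTop) :
    Tendsto (fun k => eLpNorm ((Set.Ici (N k)).indicator (x k)) p μ) l (𝓝 0) := by
  have hbound : Tendsto (fun k => eLpNorm (⇑(x k) - ⇑z) p μ +
      eLpNorm ((Set.Ici (N k)).indicator z) p μ) l (𝓝 0) := by
    simpa using ((Lp.tendsto_Lp_iff_tendsto_eLpNorm' x z).1 hx).add
      ((tendsto_eLpNorm_indicator_Ici hp (Lp.memLp z)).comp hN)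
  exact tendsto_of_tendsto_of_tendsto_of_le_of_le tendsto_const_nhds hbound (fun _ => zero_le)
    fun k => eLpNorm_indicator_le_eLpNorm_sub_add (Lp.aestronglyMeasurable _)
      (Lp.aestronglyMeasurable _) Fact.out measurableSet_Ici

theorem exists_le_eLpNorm_indicator_Iio [Fact (1 ≤ p)] (hp : p ≠ ∞) {y : Lp E p μ}
    {d : ℝ≥0∞} (hd : d < ‖y‖ₑ) :
    ∃ M : ℕ, ∃ c : ℝ≥0∞, c ≠ 0 ∧ c ≠ ∞ ∧
      ∀ v : Lp E p μ, ‖v - y‖ₑ ≤ d → c ≤ eLpNorm ((Set.Iio M).indicator v) p μ := by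
  obtain ⟨M, hM⟩ := ((tendsto_eLpNorm_indicator_Ici hp (Lp.memLp y)).eventually_lt_const
    (tsub_pos_of_lt hd)).exists
  refine ⟨M, ‖y‖ₑ - d - eLpNorm ((Set.Ici M).indicator y) p μ, (tsub_pos_of_lt hM).ne',
    (tsub_le_self.trans_lt (tsub_le_self.trans_lt enorm_lt_top)).ne, fun v hv => ?_⟩
  have hy := Lp.aestronglyMeasurable y
  rw [tsub_le_iff_right, tsub_le_iff_right]
  calc ‖y‖ₑ = eLpNorm ((Set.Iio M).indicator y + (Set.Ici M).indicator y) p μ := by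
        rw [← Set.compl_Iio, Set.indicator_self_add_compl, Lp.enorm_def]
    _ ≤ eLpNorm ((Set.Iio M).indicator y) p μ + eLpNorm ((Set.Ici M).indicator y) p μ :=
        eLpNorm_add_le (hy.indicator measurableSet_Iio) (hy.indicator measurableSet_Ici) Fact.out
    _ ≤ eLpNorm ((Set.Iio M).indicator v) p μ + d + eLpNorm ((Set.Ici M).indicator y) p μ := by
        gcongr
        calc _ ≤ eLpNorm (⇑y - ⇑v) p μ + eLpNorm ((Set.Iio M).indicator v) p μ :=
              eLpNorm_indicator_le_eLpNorm_sub_add hy (Lp.aestronglyMeasurable v) Fact.out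
                measurableSet_Iio
          _ ≤ _ := by
              rw [add_comm, eLpNorm_sub_comm, ← eLpNorm_congr_ae (Lp.coeFn_sub v y),
                ← Lp.enorm_def]
              gcongr
    _ = _ := add_right_comm _ _ _

end NatIndexed

section Weighted

variable {I E : Type*} [NormedAddCommGroup E] {p : ℝ≥0∞}

theorem wMeasure_singleton [MeasurableSpace I] [MeasurableSingletonClass I] (ω : I → ℝ) (m : I) :
    wMeasure p ω {m} = ENNReal.ofReal (ω m ^ p.toReal) := by
  rw [wMeasure, Measure.sum_apply _ (measurableSet_singleton m), tsum_eq_single m]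
  · simp
  · intro k hk
    simp [hk]

theorem eLpNorm_indicator_singleton_wMeasure [MeasurableSpace I] [MeasurableSingletonClass I]
    (hp0 : p ≠ 0) (hp : p ≠ ∞) {ω : I → ℝ} {m : I} (hω : 0 ≤ ω m) (f : I → E) :
    eLpNorm (({m} : Set I).indicator f) p (wMeasure p ω) = ENNReal.ofReal (ω m) * ‖f m‖ₑ := by
  have hq : 0 < p.toReal := ENNReal.toReal_pos hp0 hp
  have hconst : ({m} : Set I).indicator f = ({m} : Set I).indicator fun _ => f m := by
    ext k
    by_cases hk : k = m <;> simp [hk]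
  rw [hconst, eLpNorm_indicator_const (measurableSet_singleton m) hp0 hp, wMeasure_singleton,
    ENNReal.ofReal_rpow_of_nonneg (Real.rpow_nonneg hω _) (by positivity), one_div,
    Real.rpow_rpow_inv hω hq.ne', mul_comm]

variable {ω : ℕ → ℝ}

theorem eLpNorm_indicator_Iio_wMeasure_le (hp1 : 1 ≤ p) (hp : p ≠ ∞) (hω : ∀ m, 0 ≤ ω m)
    (f : ℕ → E) (M : ℕ) :
    eLpNorm ((Set.Iio M).indicator f) p (wMeasure p ω) ≤
      ∑ j ∈ Finset.range M, ENNReal.ofReal (ω j) * ‖f j‖ₑ := by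
  have hsum : (Set.Iio M).indicator f = ∑ j ∈ Finset.range M, ({j} : Set ℕ).indicator f := by
    ext m
    simp [Set.indicator_apply, Finset.sum_apply]
  rw [hsum]
  refine (eLpNorm_sum_le (fun _ _ => StronglyMeasurable.of_discrete.aestronglyMeasurable)
    hp1).trans_eq (Finset.sum_congr rfl fun j _ => ?_)
  exact eLpNorm_indicator_singleton_wMeasure (zero_lt_one.trans_le hp1).ne' hp (hω j) f

theorem ofReal_mul_enorm_le_eLpNorm_indicator_Ici (hp0 : p ≠ 0) (hp : p ≠ ∞) {m N : ℕ}
    (hω : 0 ≤ ω m) (hNm : N ≤ m) (f : ℕ → E) :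
    ENNReal.ofReal (ω m) * ‖f m‖ₑ ≤ eLpNorm ((Set.Ici N).indicator f) p (wMeasure p ω) := by
  rw [← eLpNorm_indicator_singleton_wMeasure hp0 hp hω]
  exact eLpNorm_mono_enorm fun k => enorm_indicator_le_of_subset (by simpa using hNm) f k

theorem exists_ofReal_mul_le_mul_eLpNorm_indicator_Ici (hp1 : 1 ≤ p) (hp : p ≠ ∞)
    (hω : ∀ m, 0 ≤ ω m) {v : ℕ → E} {c : ℝ≥0∞} (hc0 : c ≠ 0) {M N : ℕ}
    (hc : c ≤ eLpNorm ((Set.Iio M).indicator fun j => v (j + N)) p (wMeasure p ω)) :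
    ∃ j, ENNReal.ofReal (ω (j + N)) * c ≤
      (∑ i ∈ Finset.range M, ENNReal.ofReal (ω i)) *
        eLpNorm ((Set.Ici N).indicator v) p (wMeasure p ω) := by
  set W := ∑ i ∈ Finset.range M, ENNReal.ofReal (ω i)
  have hhead := hc.trans (eLpNorm_indicator_Iio_wMeasure_le hp1 hp hω _ M)
  obtain ⟨j, -, hmax⟩ := (Finset.range M).exists_max_image (fun i => ‖v (i + N)‖ₑ)
    (Finset.nonempty_of_sum_ne_zero (ne_bot_of_le_ne_bot hc0 hhead))
  have hcj : c ≤ W * ‖v (j + N)‖ₑ := by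
    refine hhead.trans ?_
    rw [Finset.sum_mul]
    exact Finset.sum_le_sum fun i hi => by gcongr; exact hmax i hi
  refine ⟨j, ?_⟩
  calc ENNReal.ofReal (ω (j + N)) * c ≤ ENNReal.ofReal (ω (j + N)) * (W * ‖v (j + N)‖ₑ) := by
        gcongr
    _ = W * (ENNReal.ofReal (ω (j + N)) * ‖v (j + N)‖ₑ) := mul_left_comm _ _ _
    _ ≤ W * eLpNorm ((Set.Ici N).indicator v) p (wMeasure p ω) := by
        gcongr
        exact ofReal_mul_enorm_le_eLpNorm_indicator_Ici (zero_lt_one.trans_le hp1).ne' hp (hω _)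
          (Nat.le_add_left N j) v

end Weighted

theorem tendsto_zero_of_ofReal_mul_le {ι : Type*} {l : Filter ι} {f : ι → ℝ} {g : ι → ℝ≥0∞}
    {c : ℝ≥0∞} (hf : ∀ i, 0 ≤ f i) (hc0 : c ≠ 0) (hc : c ≠ ∞) (hg : Tendsto g l (𝓝 0))
    (hfg : ∀ i, ENNReal.ofReal (f i) * c ≤ g i) : Tendsto f l (𝓝 0) := by
  have hdiv : Tendsto (fun i => g i / c) l (𝓝 0) := by
    simpa using ENNReal.Tendsto.div_const hg (Or.inr hc0)
  have hofReal : Tendsto (fun i => ENNReal.ofReal (f i)) l (𝓝 0) :=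
    tendsto_of_tendsto_of_tendsto_of_le_of_le tendsto_const_nhds hdiv (fun _ => zero_le)
      fun i => (ENNReal.le_div_iff_mul_le (Or.inl hc0) (Or.inl hc)).2 (hfg i)
  refine ((ENNReal.tendsto_toReal ENNReal.zero_ne_top).comp hofReal).congr fun i => ?_
  exact ENNReal.toReal_ofReal (hf i)

theorem liminf_eq_zero_of_tendsto_comp {f : ℕ → ℝ} (hf : ∀ n, 0 ≤ f n) {m : ℕ → ℕ}
    (hm : Tendsto m atTop atTop) (h : Tendsto (f ∘ m) atTop (𝓝 0)) : liminf f atTop = 0 := by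
  have hcobdd : IsCoboundedUnder (· ≥ ·) atTop f :=
    h.isCoboundedUnder_ge.mono (map_mono hm)
  have hbdd : IsBoundedUnder (· ≥ ·) atTop f := isBoundedUnder_of ⟨0, hf⟩
  refine le_antisymm ?_ (le_liminf_of_le hcobdd (.of_forall hf))
  exact (hm.liminf_le_liminf_comp h.isCoboundedUnder_ge hbdd).trans_eq h.liminf_eq

theorem shift_pow_apply {𝕜 E : Type*} [NontriviallyNormedField 𝕜] [NormedAddCommGroup E]
    [NormedSpace 𝕜 E] {p : ℝ≥0∞} [Fact (1 ≤ p)] {μ : Measure ℕ} {B : Lp E p μ →L[𝕜] Lp E p μ}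
    (hB : ∀ (x : Lp E p μ) (k : ℕ), B x k = x (k + 1)) (N : ℕ) (x : Lp E p μ) (k : ℕ) :
    (B ^ N) x k = x (k + N) := by
  induction N generalizing x with
  | zero => rfl
  | succ N ih => exact (ih (B x)).trans (by rw [hB, add_assoc])

theorem stmt4_general (p : ENNReal) [Fact (1 ≤ p)] (hp : p ≠ ∞) (ω : ℕ → ℝ) (hω : ∀ k, 0 < ω k)
    (B : Lp ℂ p (wMeasure p ω) →L[ℂ] Lp ℂ p (wMeasure p ω))
    (hB : ∀ (x : Lp ℂ p (wMeasure p ω)) (k : ℕ), B x k = x (k + 1))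
    (n : ℕ → ℕ) (hn : StrictMono n) (x : ℕ → Lp ℂ p (wMeasure p ω))
    (z : Lp ℂ p (wMeasure p ω)) (hconv : Tendsto x atTop (nhds z))
    (y : Lp ℂ p (wMeasure p ω)) (δ : ℝ) (hδ : 0 < δ)
    (h0 : (0 : Lp ℂ p (wMeasure p ω)) ∉ Metric.closedBall y δ)
    (hball : ∀ k, ‖(B ^ n k) (x k) - y‖ < δ) :
    Filter.liminf ω Filter.atTop = 0 := by
  have hω0 : ∀ k, 0 ≤ ω k := fun k => (hω k).le
  have hδy : ENNReal.ofReal δ < ‖y‖ₑ := by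
    rw [← ofReal_norm, ENNReal.ofReal_lt_ofReal_iff_of_nonneg hδ.le]
    simpa [dist_eq_norm] using h0
  obtain ⟨M, c, hc0, hctop, hhead⟩ := exists_le_eLpNorm_indicator_Iio hp hδy
  have hbound : ∀ k, ∃ j, ENNReal.ofReal (ω (j + n k)) * c ≤
      (∑ i ∈ Finset.range M, ENNReal.ofReal (ω i)) *
        eLpNorm ((Set.Ici (n k)).indicator (x k)) p (wMeasure p ω) := by
    intro k
    have hk := hhead _ (by rw [← ofReal_norm]; exact ENNReal.ofReal_le_ofReal (hball k).le)
    rw [show ⇑((B ^ n k) (x k)) = fun j => x k (j + n k) from funext (shift_pow_apply hB _ _)]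
      at hk
    exact exists_ofReal_mul_le_mul_eLpNorm_indicator_Ici Fact.out hp hω0 hc0 hk
  choose j hj using hbound
  have htail := tendsto_eLpNorm_indicator_Ici_of_tendsto hp hconv hn.tendsto_atTop
  refine liminf_eq_zero_of_tendsto_comp hω0 (m := fun k => j k + n k)
    (tendsto_atTop_mono (fun k => Nat.le_add_left _ _) hn.tendsto_atTop) ?_
  refine tendsto_zero_of_ofReal_mul_le (fun k => hω0 _) hc0 hctop ?_ hj
  simpa using ENNReal.Tendsto.const_mul htail
    (Or.inr (ENNReal.sum_ne_top.2 fun _ _ => ENNReal.ofReal_ne_top))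

theorem stmt4 (p : ENNReal) [Fact (1 ≤ p)] (hp : p ≠ ∞) (ω : ℕ → ℝ) (hω : ∀ k, 0 < ω k)
    (hbdd : ∃ C : ℝ, ∀ n, ω n / ω (n + 1) ≤ C)
    (B : Lp ℂ p (wMeasure p ω) →L[ℂ] Lp ℂ p (wMeasure p ω))
    (hB : ∀ (x : Lp ℂ p (wMeasure p ω)) (k : ℕ), B x k = x (k + 1))
    (n : ℕ → ℕ) (hn : StrictMono n) (x : ℕ → Lp ℂ p (wMeasure p ω))
    (z : Lp ℂ p (wMeasure p ω)) (hconv : Tendsto x atTop (nhds z))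
    (y : Lp ℂ p (wMeasure p ω)) (δ : ℝ) (hδ : 0 < δ)
    (h0 : (0 : Lp ℂ p (wMeasure p ω)) ∉ Metric.closedBall y δ)
    (hball : ∀ k, ‖(B ^ n k) (x k) - y‖ < δ) :
    Filter.liminf ω Filter.atTop = 0 :=
  stmt4_general p hp ω hω B hB n hn x z hconv y δ hδ h0 hball

end
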